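/- Lifting of exponential preservation along a weak equivalence: let C, D, E be cartesian closed categories, G : C ⥤ D fully faithful and essentially surjective preserving finite products, F : C ⥤ E a cartesian closed functor (preserving finite products and exponentials), H : D ⥤ E preserving finite products, and α : G ⋙ H ≅ F a natural isomorphism. Then H preserves exponentials, i.e., for all x, y : D the canonical comparison map H(y^x) ⟶ (H y)^(H x) is an isomorphism. -/

import Mathlib

/-!
Choosing an inverse `G⁻¹` of the equivalence `G`, we get `H ≅ G⁻¹ ⋙ G ⋙ H ≅ G⁻¹ ⋙ F`.
Equivalences are cartesian closed functors, cartesian closed functors compose, and being cartesian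
closed is invariant under natural isomorphism, because the exponential comparison maps of
isomorphic functors differ by isomorphisms.
-/

open CategoryTheory CategoryTheory.Limits

namespace CategoryTheory

open MonoidalClosed MonoidalCategory CartesianMonoidalCategory CartesianClosed

variable {C : Type*} [Category C] {D : Type*} [Category D] {E : Type*} [Category E]
variable [CartesianMonoidalCategory C] [CartesianMonoidalCategory D] [CartesianMonoidalCategory E]

lemma prodComparison_natural_natTrans {F₁ F₂ : C ⥤ D} (τ : F₁ ⟶ F₂) (A B : C) :
    τ.app (A ⊗ B) ≫ CartesianMonoidalCategory.prodComparison F₂ A B =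
      CartesianMonoidalCategory.prodComparison F₁ A B ≫ (τ.app A ⊗ₘ τ.app B) := by
  apply hom_ext <;> simp [CartesianMonoidalCategory.prodComparison, τ.naturality]

instance MonoidalClosed.isIso_pre [MonoidalClosed C] {A B : C} (f : B ⟶ A) [IsIso f] :
    IsIso (pre f) :=
  inferInstanceAs (IsIso (internalHom.map f.op))

variable [MonoidalClosed C] [MonoidalClosed D] [MonoidalClosed E]

lemma expComparison_comp_app (F₁ : C ⥤ D) (F₂ : D ⥤ E)
    [PreservesLimitsOfShape (Discrete WalkingPair) F₁]
    [PreservesLimitsOfShape (Discrete WalkingPair) F₂] (a b : C) :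
    (expComparison (F₁ ⋙ F₂) a).natTrans.app b =
      F₂.map ((expComparison F₁ a).natTrans.app b) ≫
        (expComparison F₂ (F₁.obj a)).natTrans.app (F₁.obj b) := by
  apply uncurry_injective
  rw [uncurry_expComparison, uncurry_natural_left, uncurry_expComparison]
  simp only [Functor.comp_obj, Functor.comp_map]
  have hwhisker : (F₂.obj (F₁.obj a) ◁ F₂.map ((expComparison F₁ a).natTrans.app b)) ≫
      inv (CartesianMonoidalCategory.prodComparison F₂ (F₁.obj a) (F₁.obj a ⟹ F₁.obj b)) =
      inv (CartesianMonoidalCategory.prodComparison F₂ (F₁.obj a) (F₁.obj (a ⟹ b))) ≫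
        F₂.map (F₁.obj a ◁ (expComparison F₁ a).natTrans.app b) :=
    (prodComparison_inv_natural_whiskerLeft ..).symm
  rw [reassoc_of% hwhisker, ← F₂.map_comp, ← uncurry_eq, uncurry_expComparison,
    IsIso.inv_comp_eq, CartesianMonoidalCategory.prodComparison_comp]
  simp

lemma expComparison_natIso_app {F₁ F₂ : C ⥤ D} (α : F₁ ≅ F₂)
    [PreservesLimitsOfShape (Discrete WalkingPair) F₁]
    [PreservesLimitsOfShape (Discrete WalkingPair) F₂] (a b : C) :
    α.hom.app (a ⟹ b) ≫ (expComparison F₂ a).natTrans.app b =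
      (expComparison F₁ a).natTrans.app b ≫ (ihom (F₁.obj a)).map (α.hom.app b) ≫
        (pre (α.inv.app a)).app (F₂.obj b) := by
  apply uncurry_injective
  rw [uncurry_natural_left, uncurry_expComparison, uncurry_natural_left,
    uncurry_natural_left, uncurry_pre, ← MonoidalCategory.whiskerLeft_comp_assoc,
    whisker_exchange_assoc, ← uncurry_eq, uncurry_natural_right, uncurry_expComparison]
  have hpc : inv (CartesianMonoidalCategory.prodComparison F₁ a (a ⟹ b)) ≫
      α.hom.app (a ⊗ (a ⟹ b)) = (α.hom.app a ⊗ₘ α.hom.app (a ⟹ b)) ≫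
        inv (CartesianMonoidalCategory.prodComparison F₂ a (a ⟹ b)) := by
    rw [IsIso.eq_comp_inv, Category.assoc, IsIso.inv_comp_eq, prodComparison_natural_natTrans]
  have hw : (α.inv.app a ▷ F₁.obj (a ⟹ b)) ≫ (α.hom.app a ⊗ₘ α.hom.app (a ⟹ b)) =
      F₂.obj a ◁ α.hom.app (a ⟹ b) := by
    rw [MonoidalCategory.tensorHom_def]
    simp [← comp_whiskerRight_assoc]
  have hev : F₁.map ((ihom.ev a).app b) ≫ α.hom.app b =
      α.hom.app (a ⊗ (a ⟹ b)) ≫ F₂.map ((ihom.ev a).app b) :=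
    α.hom.naturality _
  rw [Category.assoc, hev, reassoc_of% hpc, reassoc_of% hw]

namespace MonoidalClosedFunctor

variable {F₁ F₂ : C ⥤ D} [PreservesLimitsOfShape (Discrete WalkingPair) F₁]
  [PreservesLimitsOfShape (Discrete WalkingPair) F₂]

lemma of_iso (α : F₁ ≅ F₂) [MonoidalClosedFunctor F₁] : MonoidalClosedFunctor F₂ where
  comparison_iso a := by
    have (b : C) : IsIso ((expComparison F₂ a).natTrans.app b) := by
      have : IsIso (α.hom.app (a ⟹ b) ≫ (expComparison F₂ a).natTrans.app b) := by
        rw [expComparison_natIso_app]; infer_instance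
      exact IsIso.of_isIso_comp_left (α.hom.app _) _
    exact NatIso.isIso_of_isIso_app _

instance comp (F₃ : D ⥤ E) [PreservesLimitsOfShape (Discrete WalkingPair) F₃]
    [MonoidalClosedFunctor F₁] [MonoidalClosedFunctor F₃] :
    MonoidalClosedFunctor (F₁ ⋙ F₃) where
  comparison_iso a := by
    have (b : C) : IsIso ((expComparison (F₁ ⋙ F₃) a).natTrans.app b) := by
      rw [expComparison_comp_app]; infer_instance
    exact NatIso.isIso_of_isIso_app _

instance of_isEquivalence (F : C ⥤ D) [F.IsEquivalence] : MonoidalClosedFunctor F :=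
  cartesianClosedFunctorOfLeftAdjointPreservesBinaryProducts F F.asEquivalence.symm.toAdjunction

end MonoidalClosedFunctor

end CategoryTheory

theorem weak_equiv_lifts_preserves_exponentials_general
    {C : Type*} [Category C] {D : Type*} [Category D] {E : Type*} [Category E]
    [CartesianMonoidalCategory C] [CartesianMonoidalCategory D] [CartesianMonoidalCategory E]
    [MonoidalClosed C] [MonoidalClosed D] [MonoidalClosed E]
    (G : C ⥤ D) [G.Full] [G.Faithful] [G.EssSurj]
    (F : C ⥤ E) [PreservesLimitsOfShape (Discrete WalkingPair) F]
    [MonoidalClosedFunctor F]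
    (H : D ⥤ E) [PreservesLimitsOfShape (Discrete WalkingPair) H]
    (α : G ⋙ H ≅ F) :
    MonoidalClosedFunctor H := by
  have : G.IsEquivalence := { }
  exact .of_iso ((Functor.isoWhiskerLeft G.inv α).symm ≪≫ G.asEquivalence.invFunIdAssoc H)

/-- Lifting of exponential preservation along a weak equivalence: if `F = G ⋙ H`
(up to natural isomorphism) is cartesian closed and `G` is a weak equivalence,
then `H` is a cartesian closed functor, i.e. all exponential comparison maps of
`H` are isomorphisms. -/
theorem weak_equiv_lifts_preserves_exponentials
    {C : Type*} [Category C] {D : Type*} [Category D] {E : Type*} [Category E]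
    [CartesianMonoidalCategory C] [CartesianMonoidalCategory D] [CartesianMonoidalCategory E]
    [MonoidalClosed C] [MonoidalClosed D] [MonoidalClosed E]
    (G : C ⥤ D) [G.Full] [G.Faithful] [G.EssSurj]
    [PreservesLimitsOfShape (Discrete WalkingPair) G]
    (F : C ⥤ E) [PreservesLimitsOfShape (Discrete WalkingPair) F]
    [MonoidalClosedFunctor F]
    (H : D ⥤ E) [PreservesLimitsOfShape (Discrete WalkingPair) H]
    (α : G ⋙ H ≅ F) :
    MonoidalClosedFunctor H :=
  weak_equiv_lifts_preserves_exponentials_general G F H α
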